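/- A graph G is α-critical if and only if for every vertex v of G the set V(G)∖N_G[v] induces a maximal induced subgraph of G with stability number α(G)−1. -/
import Mathlib


open SimpleGraph

/-- The stability (independence) number of the subgraph of `G` induced on the
vertex set `S`: the maximum cardinality of a stable (independent) subset of `S`. -/
noncomputable def alphaOn {V : Type*} [Fintype V] (G : SimpleGraph V) (S : Set V) : ℕ :=
  sSup {n | ∃ s : Finset V, ↑s ⊆ S ∧ (∀ u ∈ s, ∀ v ∈ s, ¬ G.Adj u v) ∧ s.card = n}

/-- The stability (independence) number `α(G)` of `G`. -/
noncomputable def alphaNum {V : Type*} [Fintype V] (G : SimpleGraph V) : ℕ :=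
  alphaOn G Set.univ

/-- The edge `{u, v}` of `G` is an α-critical edge: deleting it increases the
stability number by one. -/
def IsCriticalEdge {V : Type*} [Fintype V] (G : SimpleGraph V) (u v : V) : Prop :=
  G.Adj u v ∧ alphaNum (G.deleteEdges {s(u, v)}) = alphaNum G + 1

/-- `G` is an α-critical graph: every edge is α-critical. -/
def IsAlphaCritical {V : Type*} [Fintype V] (G : SimpleGraph V) : Prop :=
  ∀ u v, G.Adj u v → alphaNum (G.deleteEdges {s(u, v)}) = alphaNum G + 1

/-- `S` induces a maximal induced subgraph of `G` with stability number `α(G) - 1`: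
`α(G[S]) = α(G) - 1` and adding any further vertex raises the stability number to `α(G)`. -/
def IsMaxAlphaSub {V : Type*} [Fintype V] (G : SimpleGraph V) (S : Set V) : Prop :=
  alphaOn G S + 1 = alphaNum G ∧ ∀ w ∉ S, alphaOn G (insert w S) = alphaNum G

/-- The 1-join `j(G, G₀, H, H₀)` of `G` and `H`, where `A = V(G₀)` and `B = V(H₀)`:
the disjoint union of `G` and `H` together with all edges between `V(G) ∖ A` and
`V(H) ∖ B`. -/
def oneJoin {α β : Type*} (G : SimpleGraph α) (H : SimpleGraph β)
    (A : Set α) (B : Set β) : SimpleGraph (α ⊕ β) :=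
  SimpleGraph.fromRel (fun x y =>
    (∃ a b, x = Sum.inl a ∧ y = Sum.inl b ∧ G.Adj a b) ∨
    (∃ a b, x = Sum.inr a ∧ y = Sum.inr b ∧ H.Adj a b) ∨
    (∃ a b, x = Sum.inl a ∧ y = Sum.inr b ∧ a ∉ A ∧ b ∉ B))

/-- The edge-vertex composition `c(G, e, H, v)` with `e = {v₁, v₂}` and
`N_H(v) = U₁ ⊔ U₂`: vertex set `V(G) ⊔ (V(H) ∖ {v})`, edge set
`(E(G) ∖ {e}) ∪ E(H - v) ∪ {v₁u : u ∈ U₁} ∪ {v₂u : u ∈ U₂}`. -/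
def evComp {α β : Type*} (G : SimpleGraph α) (v₁ v₂ : α) (H : SimpleGraph β) (v : β)
    (U₁ U₂ : Set β) : SimpleGraph (α ⊕ {b : β // b ≠ v}) :=
  SimpleGraph.fromRel (fun x y =>
    (∃ a b, x = Sum.inl a ∧ y = Sum.inl b ∧ G.Adj a b ∧ s(a, b) ≠ s(v₁, v₂)) ∨
    (∃ a b : {b : β // b ≠ v}, x = Sum.inr a ∧ y = Sum.inr b ∧ H.Adj a b) ∨
    (∃ b : {b : β // b ≠ v}, x = Sum.inl v₁ ∧ y = Sum.inr b ∧ (b : β) ∈ U₁) ∨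
    (∃ b : {b : β // b ≠ v}, x = Sum.inl v₂ ∧ y = Sum.inr b ∧ (b : β) ∈ U₂))

/-- The splitting `s(H, v)` of the vertex `v` of `H`, with `N_H(v) = N₁ ⊔ N₂`.
The new vertices `v′`, `v″`, `u` are represented by `Sum.inr 0`, `Sum.inr 1`,
`Sum.inr 2` respectively. -/
def splitting {β : Type*} (H : SimpleGraph β) (v : β) (N₁ N₂ : Set β) :
    SimpleGraph ({b : β // b ≠ v} ⊕ Fin 3) :=
  SimpleGraph.fromRel (fun x y =>
    (∃ a b : {b : β // b ≠ v}, x = Sum.inl a ∧ y = Sum.inl b ∧ H.Adj a b) ∨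
    (∃ a : {b : β // b ≠ v}, x = Sum.inl a ∧ y = Sum.inr 0 ∧ (a : β) ∈ N₁) ∨
    (∃ a : {b : β // b ≠ v}, x = Sum.inl a ∧ y = Sum.inr 1 ∧ (a : β) ∈ N₂) ∨
    (x = Sum.inr 0 ∧ y = Sum.inr 2) ∨ (x = Sum.inr 1 ∧ y = Sum.inr 2))

/-- The duplication `d(G, v)` of the vertex `v` of `G`: a new vertex `v′`
(represented by `Sum.inr ()`) is added, adjacent exactly to the closed
neighborhood `N_G[v]`. -/
def duplication {α : Type*} (G : SimpleGraph α) (v : α) : SimpleGraph (α ⊕ Unit) :=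
  SimpleGraph.fromRel (fun x y =>
    (∃ a b, x = Sum.inl a ∧ y = Sum.inl b ∧ G.Adj a b) ∨
    (∃ a, x = Sum.inl a ∧ y = Sum.inr () ∧ a ∈ insert v (G.neighborSet v)))

/-- A graph is duplication free iff it contains no pair of adjacent vertices
with equal closed neighborhoods. -/
def DuplicationFree {α : Type*} (G : SimpleGraph α) : Prop :=
  ∀ u v, G.Adj u v → insert u (G.neighborSet u) ≠ insert v (G.neighborSet v)

/-- `G` is 2-connected: it has at least three vertices and the deletion of any
single vertex leaves it connected. -/
def TwoConnected {V : Type*} [Fintype V] (G : SimpleGraph V) : Prop :=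
  3 ≤ Fintype.card V ∧ ∀ x : V, (G.induce {x}ᶜ).Connected

section AlphaHelpers

variable {V : Type*} [Fintype V] [DecidableEq V] {G : SimpleGraph V}

private lemma alpha_bdd (G : SimpleGraph V) (S : Set V) :
    BddAbove {n | ∃ s : Finset V, ↑s ⊆ S ∧ (∀ u ∈ s, ∀ v ∈ s, ¬ G.Adj u v) ∧ s.card = n} := by
  refine ⟨Fintype.card V, fun n hn => ?_⟩
  obtain ⟨t, -, -, hc⟩ := hn
  exact hc ▸ t.card_le_univ

private lemma le_alphaOn {S : Set V} {s : Finset V} (hs : ↑s ⊆ S)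
    (hi : ∀ u ∈ s, ∀ v ∈ s, ¬ G.Adj u v) : s.card ≤ alphaOn G S :=
  le_csSup (alpha_bdd G S) ⟨s, hs, hi, rfl⟩

private lemma alpha_ne (G : SimpleGraph V) (S : Set V) :
    {n | ∃ s : Finset V, ↑s ⊆ S ∧ (∀ u ∈ s, ∀ v ∈ s, ¬ G.Adj u v) ∧ s.card = n}.Nonempty := by
  refine ⟨0, ?_⟩
  exact ⟨∅, by simp, by simp, by simp⟩

private lemma alphaNum_def (G : SimpleGraph V) : alphaNum G = alphaOn G Set.univ := rfl

private lemma exists_indep (G : SimpleGraph V) (S : Set V) :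
    ∃ s : Finset V, ↑s ⊆ S ∧ (∀ u ∈ s, ∀ v ∈ s, ¬ G.Adj u v) ∧ s.card = alphaOn G S :=
  Nat.sSup_mem (alpha_ne G S) (alpha_bdd G S)

private lemma alphaOn_le {S : Set V} {n : ℕ}
    (h : ∀ s : Finset V, ↑s ⊆ S → (∀ u ∈ s, ∀ v ∈ s, ¬ G.Adj u v) → s.card ≤ n) :
    alphaOn G S ≤ n := by
  refine csSup_le (alpha_ne G S) ?_
  rintro m ⟨s, h1, h2, rfl⟩
  exact h s h1 h2

private lemma alphaOn_mono {S T : Set V} (h : S ⊆ T) : alphaOn G S ≤ alphaOn G T := by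
  obtain ⟨s, h1, h2, hc⟩ := exists_indep G S
  rw [← hc]
  exact le_alphaOn (h1.trans h) h2

/-- Inserting `v` into an independent set avoiding `N[v]` keeps it independent. -/
private lemma insert_indep {s : Finset V} {v : V}
    (h1 : ↑s ⊆ ((insert v (G.neighborSet v) : Set V))ᶜ)
    (h2 : ∀ u ∈ s, ∀ w ∈ s, ¬ G.Adj u w) :
    ∀ u ∈ insert v s, ∀ w ∈ insert v s, ¬ G.Adj u w := by
  have key : ∀ a ∈ s, ¬ G.Adj v a := by
    intro a ha hadj
    exact (h1 ha) (Set.mem_insert_iff.mpr (Or.inr hadj))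
  intro x hx y hy hadj
  rcases Finset.mem_insert.mp hx with hx' | hx'
  · rcases Finset.mem_insert.mp hy with hy' | hy'
    · rw [hx', hy'] at hadj; exact G.irrefl hadj
    · rw [hx'] at hadj; exact key y hy' hadj
  · rcases Finset.mem_insert.mp hy with hy' | hy'
    · rw [hy'] at hadj; exact key x hx' hadj.symm
    · exact h2 x hx' y hy' hadj

private lemma v_not_mem {s : Finset V} {v : V}
    (h1 : ↑s ⊆ ((insert v (G.neighborSet v) : Set V))ᶜ) : v ∉ s :=
  fun h => (h1 h) (Set.mem_insert _ _)

/-- Fact A: `α(G[N[v]ᶜ]) + 1 ≤ α(G)` always. -/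
private lemma alphaOn_compl_add_one_le (G : SimpleGraph V) (v : V) :
    alphaOn G ((insert v (G.neighborSet v) : Set V))ᶜ + 1 ≤ alphaNum G := by
  obtain ⟨s, h1, h2, hc⟩ := exists_indep G ((insert v (G.neighborSet v) : Set V))ᶜ
  have := le_alphaOn (G := G) (S := Set.univ) (s := insert v s)
    (by simp) (insert_indep h1 h2)
  rwa [Finset.card_insert_of_notMem (v_not_mem h1), hc] at this

/-- Fact B: deleting one edge raises `α` by at most one. -/
private lemma alphaNum_deleteEdges_le (G : SimpleGraph V) (u v : V) :
    alphaNum (G.deleteEdges {s(u, v)}) ≤ alphaNum G + 1 := by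
  refine alphaOn_le fun s _ hi => ?_
  have herase : (s.erase u).card ≤ alphaNum G := by
    refine le_alphaOn (by simp) ?_
    intro x hx y hy hadj
    refine hi x (Finset.mem_of_mem_erase hx) y (Finset.mem_of_mem_erase hy) ?_
    rw [SimpleGraph.deleteEdges_adj]
    refine ⟨hadj, ?_⟩
    simp only [Set.mem_singleton_iff, Sym2.eq_iff]
    rintro (⟨h1, -⟩ | ⟨-, h2⟩)
    · exact Finset.ne_of_mem_erase hx h1
    · exact Finset.ne_of_mem_erase hy h2
  have := Finset.pred_card_le_card_erase (s := s) (a := u)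
  omega

/-- From a critical edge, extract a maximum independent set of `G - e`
containing both endpoints. -/
private lemma crit_witness (G : SimpleGraph V) {u v : V} (hadj : G.Adj u v)
    (hcrit : alphaNum (G.deleteEdges {s(u, v)}) = alphaNum G + 1) :
    ∃ s : Finset V, u ∈ s ∧ v ∈ s ∧
      (∀ x ∈ s, ∀ y ∈ s, G.Adj x y → s(x, y) = s(u, v)) ∧ s.card = alphaNum G + 1 := by
  obtain ⟨s, -, hi, hc⟩ := exists_indep (G.deleteEdges {s(u, v)}) Set.univ
  have hc' : s.card = alphaNum G + 1 := by rw [hc, ← alphaNum_def, hcrit]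
  have hG : ∀ x ∈ s, ∀ y ∈ s, G.Adj x y → s(x, y) = s(u, v) := by
    intro x hx y hy hxy
    by_contra hne
    exact hi x hx y hy (SimpleGraph.deleteEdges_adj.mpr ⟨hxy, by simpa using hne⟩)
  have hmem : ∀ w : V, (∀ x y : V, s(x, y) = s(u, v) → x = w ∨ y = w) → w ∈ s := by
    intro w hw
    by_contra hws
    have hindep : ∀ x ∈ s, ∀ y ∈ s, ¬ G.Adj x y := by
      intro x hx y hy hxy
      rcases hw x y (hG x hx y hy hxy) with rfl | rfl
      · exact hws hx
      · exact hws hy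
    have := le_alphaOn (G := G) (S := Set.univ) (by simp) hindep
    rw [hc', ← alphaNum_def] at this
    omega
  refine ⟨s, hmem u ?_, hmem v ?_, hG, hc'⟩
  · intro x y h
    rcases Sym2.eq_iff.mp h with ⟨h1, -⟩ | ⟨-, h2⟩
    · exact Or.inl h1
    · exact Or.inr h2
  · intro x y h
    rcases Sym2.eq_iff.mp h with ⟨-, h2⟩ | ⟨h1, -⟩
    · exact Or.inr h2
    · exact Or.inl h1

end AlphaHelpers

/-- `G` is α-critical iff for every vertex `v` the set
`V(G) ∖ N_G[v]` induces a maximal induced subgraph of `G` with stability number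
`α(G) - 1`. -/
theorem isAlphaCritical_iff_forall_isMaxAlphaSub {V : Type*} [Fintype V]
    (G : SimpleGraph V) :
    IsAlphaCritical G ↔ ∀ v : V, IsMaxAlphaSub G ((insert v (G.neighborSet v))ᶜ) := by
  classical
  constructor
  · intro hcrit v
    have part1 : alphaOn G ((insert v (G.neighborSet v))ᶜ) + 1 = alphaNum G := by
      refine le_antisymm (alphaOn_compl_add_one_le G v) ?_
      by_cases hnb : ∃ u, G.Adj v u
      · obtain ⟨u, hu⟩ := hnb
        obtain ⟨s, hvs, hus, hG, hc⟩ := crit_witness G hu (hcrit v u hu)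
        set J := (s.erase u).erase v with hJdef
        have hJs : ∀ x ∈ J, x ∈ s := fun x hx =>
          Finset.mem_of_mem_erase (Finset.mem_of_mem_erase hx)
        have hJv : ∀ x ∈ J, x ≠ v := fun x hx => Finset.ne_of_mem_erase hx
        have hJu : ∀ x ∈ J, x ≠ u := fun x hx =>
          Finset.ne_of_mem_erase (Finset.mem_of_mem_erase hx)
        have hJsub : ↑J ⊆ ((insert v (G.neighborSet v) : Set V))ᶜ := by
          intro x hx
          rw [Finset.mem_coe] at hx
          simp only [Set.mem_compl_iff, Set.mem_insert_iff, SimpleGraph.mem_neighborSet]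
          push_neg
          refine ⟨hJv x hx, fun hvx => ?_⟩
          rcases Sym2.eq_iff.mp (hG v hvs x (hJs x hx) hvx) with ⟨-, h2⟩ | ⟨h1, -⟩
          · exact hJu x hx h2
          · exact hu.ne h1
        have hJindep : ∀ x ∈ J, ∀ y ∈ J, ¬ G.Adj x y := by
          intro x hx y hy hxy
          rcases Sym2.eq_iff.mp (hG x (hJs x hx) y (hJs y hy) hxy) with ⟨h1, -⟩ | ⟨h1, -⟩
          · exact hJv x hx h1
          · exact hJu x hx h1
        have hle := le_alphaOn hJsub hJindep
        have hvmem : v ∈ s.erase u := Finset.mem_erase.mpr ⟨hu.ne, hvs⟩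
        have hc1 : (s.erase u).card = s.card - 1 := Finset.card_erase_of_mem hus
        have hc2 : J.card = (s.erase u).card - 1 := Finset.card_erase_of_mem hvmem
        omega
      · push_neg at hnb
        obtain ⟨s, -, hind, hc⟩ := exists_indep G Set.univ
        rw [← alphaNum_def] at hc
        have hvmem : v ∈ s := by
          by_contra hv
          have hins : ∀ x ∈ insert v s, ∀ y ∈ insert v s, ¬ G.Adj x y := by
            intro x hx y hy hxy
            rcases Finset.mem_insert.mp hx with hx' | hx'
            · rcases Finset.mem_insert.mp hy with hy' | hy'
              · rw [hx', hy'] at hxy; exact G.irrefl hxy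
              · rw [hx'] at hxy; exact hnb y hxy
            · rcases Finset.mem_insert.mp hy with hy' | hy'
              · rw [hy'] at hxy; exact hnb x hxy.symm
              · exact hind x hx' y hy' hxy
          have := le_alphaOn (G := G) (S := Set.univ) (Set.subset_univ _) hins
          rw [Finset.card_insert_of_notMem hv, ← alphaNum_def] at this
          omega
        have hsub : ↑(s.erase v) ⊆ ((insert v (G.neighborSet v) : Set V))ᶜ := by
          intro x hx
          rw [Finset.mem_coe] at hx
          simp only [Set.mem_compl_iff, Set.mem_insert_iff, SimpleGraph.mem_neighborSet]
          push_neg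
          exact ⟨Finset.ne_of_mem_erase hx, hnb x⟩
        have hle := le_alphaOn hsub
          (fun x hx y hy => hind x (Finset.mem_of_mem_erase hx) y (Finset.mem_of_mem_erase hy))
        have hc1 : (s.erase v).card = s.card - 1 := Finset.card_erase_of_mem hvmem
        have hpos : 1 ≤ s.card := Finset.card_pos.mpr ⟨v, hvmem⟩
        omega
    refine ⟨part1, ?_⟩
    intro w hw
    rw [Set.notMem_compl_iff] at hw
    refine le_antisymm ?_ ?_
    · rw [alphaNum_def]; exact alphaOn_mono (Set.subset_univ _)
    · rcases Set.mem_insert_iff.mp hw with rfl | hwv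
      · obtain ⟨s, h1, h2, hc⟩ := exists_indep G ((insert w (G.neighborSet w) : Set V))ᶜ
        have hsub : ↑(insert w s) ⊆ insert w (((insert w (G.neighborSet w) : Set V))ᶜ) := by
          intro x hx
          rw [Finset.coe_insert] at hx
          rcases Set.mem_insert_iff.mp hx with rfl | hx
          · exact Set.mem_insert _ _
          · exact Set.mem_insert_iff.mpr (Or.inr (h1 hx))
        have hle := le_alphaOn hsub (insert_indep h1 h2)
        rw [Finset.card_insert_of_notMem (v_not_mem h1), hc] at hle
        omega
      · have hadj : G.Adj v w := hwv
        obtain ⟨s, hvs, hws, hG, hc⟩ := crit_witness G hadj (hcrit v w hadj)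
        set T := s.erase v with hTdef
        have hTs : ∀ x ∈ T, x ∈ s := fun x hx => Finset.mem_of_mem_erase hx
        have hTv : ∀ x ∈ T, x ≠ v := fun x hx => Finset.ne_of_mem_erase hx
        have hTsub : ↑T ⊆ insert w (((insert v (G.neighborSet v) : Set V))ᶜ) := by
          intro x hx
          rw [Finset.mem_coe] at hx
          by_cases hxw : x = w
          · exact hxw ▸ Set.mem_insert _ _
          refine Set.mem_insert_iff.mpr (Or.inr ?_)
          simp only [Set.mem_compl_iff, Set.mem_insert_iff, SimpleGraph.mem_neighborSet]
          push_neg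
          refine ⟨hTv x hx, fun hvx => ?_⟩
          rcases Sym2.eq_iff.mp (hG v hvs x (hTs x hx) hvx) with ⟨-, h2⟩ | ⟨-, h2⟩
          · exact hxw h2
          · exact hTv x hx h2
        have hTindep : ∀ x ∈ T, ∀ y ∈ T, ¬ G.Adj x y := by
          intro x hx y hy hxy
          rcases Sym2.eq_iff.mp (hG x (hTs x hx) y (hTs y hy) hxy) with ⟨h1, -⟩ | ⟨-, h2⟩
          · exact hTv x hx h1
          · exact hTv y hy h2
        have hle := le_alphaOn hTsub hTindep
        have hc1 : T.card = s.card - 1 := Finset.card_erase_of_mem hvs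
        omega
  · intro h u v hadj
    refine le_antisymm (alphaNum_deleteEdges_le G u v) ?_
    obtain ⟨h1, h2⟩ := h v
    have hu : u ∉ ((insert v (G.neighborSet v) : Set V))ᶜ := fun hc =>
      hc (Set.mem_insert_iff.mpr (Or.inr hadj.symm))
    have h2u := h2 u hu
    obtain ⟨s, hsub, hind, hc⟩ := exists_indep G (insert u (((insert v (G.neighborSet v) : Set V))ᶜ))
    rw [h2u] at hc
    have hus : u ∈ s := by
      by_contra hun
      have hsub' : ↑s ⊆ ((insert v (G.neighborSet v) : Set V))ᶜ := by
        intro x hx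
        rcases Set.mem_insert_iff.mp (hsub hx) with rfl | hx'
        · exact absurd hx hun
        · exact hx'
      have := le_alphaOn hsub' hind
      omega
    have hvs : v ∉ s := by
      intro hv
      rcases Set.mem_insert_iff.mp (hsub hv) with h' | h'
      · exact hadj.ne h'.symm
      · exact h' (Set.mem_insert _ _)
    have hnadj : ∀ x ∈ s, x ≠ u → ¬ G.Adj v x := by
      intro x hx hxu hvx
      rcases Set.mem_insert_iff.mp (hsub hx) with h' | h'
      · exact hxu h'
      · exact h' (Set.mem_insert_iff.mpr (Or.inr hvx))
    have hKindep : ∀ x ∈ insert v s, ∀ y ∈ insert v s,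
        ¬ (G.deleteEdges {s(u, v)}).Adj x y := by
      intro x hx y hy hxy
      rw [SimpleGraph.deleteEdges_adj] at hxy
      obtain ⟨hGadj, hne⟩ := hxy
      rcases Finset.mem_insert.mp hx with hx' | hx'
      · rcases Finset.mem_insert.mp hy with hy' | hy'
        · rw [hx', hy'] at hGadj; exact G.irrefl hGadj
        · by_cases hyu : y = u
          · exact hne (by rw [hyu, hx']; exact Set.mem_singleton_iff.mpr (Sym2.eq_swap))
          · rw [hx'] at hGadj; exact hnadj y hy' hyu hGadj
      · rcases Finset.mem_insert.mp hy with hy' | hy'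
        · by_cases hxu : x = u
          · exact hne (by rw [hxu, hy']; exact Set.mem_singleton_iff.mpr rfl)
          · rw [hy'] at hGadj; exact hnadj x hx' hxu hGadj.symm
        · exact hind x hx' y hy' hGadj
    have hle := le_alphaOn (G := G.deleteEdges {s(u, v)}) (S := Set.univ)
      (Set.subset_univ _) hKindep
    rw [Finset.card_insert_of_notMem hvs, hc, ← alphaNum_def] at hle
    exact hle
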